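/- Let n ≥ 1 and let π be a permutation of [n]. Then π is a Motzkin permutation if and only if exactly one of the following holds: (i) π_1 = n and (π_2,…,π_n) is a Motzkin permutation of length n−1; or (ii) there exists t with 2 ≤ t ≤ n such that π_{t−1} = n−t+1, π_t = n, the sequence (π_1−(n−t+1), …, π_{t−2}−(n−t+1)) is a Motzkin permutation of length t−2 (in particular π_1,…,π_{t−2} is a rearrangement of {n−t+2,…,n−1}), and (π_{t+1},…,π_n) is a Motzkin permutation of length n−t. -/
import Mathlib


/-- A sequence (of distinct values) is order-isomorphic to a Motzkin permutation:
it avoids the classical pattern 132 and the generalized pattern 1-23. -/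
def SeqIsMotzkin {m : ℕ} (w : Fin m → ℕ) : Prop :=
  (¬ ∃ i j k : Fin m, i < j ∧ j < k ∧ w i < w k ∧ w k < w j) ∧
  ¬ ∃ (a b : Fin m) (h : (b : ℕ) + 1 < m), a < b ∧ w a < w b ∧ w b < w ⟨(b : ℕ) + 1, h⟩

/-- A Motzkin permutation avoids both 132 and 1-23. -/
def IsMotzkinPerm {n : ℕ} (π : Equiv.Perm (Fin n)) : Prop :=
  SeqIsMotzkin fun i => ((π i : ℕ))

lemma seq_sub {n : ℕ} {w : Fin n → ℕ} (h : SeqIsMotzkin w) (s m : ℕ) (hsm : s + m ≤ n) :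
    SeqIsMotzkin (fun i : Fin m => w ⟨s + (i : ℕ), by have := i.isLt; omega⟩) := by
  obtain ⟨h1, h2⟩ := h
  constructor
  · rintro ⟨i, j, k, hij, hjk, ha, hb⟩
    exact h1 ⟨⟨s + i, by have := i.isLt; omega⟩, ⟨s + j, by have := j.isLt; omega⟩,
      ⟨s + k, by have := k.isLt; omega⟩,
      by simp only [Fin.mk_lt_mk]; have := Fin.lt_def.mp hij; omega,
      by simp only [Fin.mk_lt_mk]; have := Fin.lt_def.mp hjk; omega, ha, hb⟩
  · rintro ⟨a, b, hb1, hab, ha, hbb⟩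
    exact h2 ⟨⟨s + a, by have := a.isLt; omega⟩, ⟨s + b, by have := b.isLt; omega⟩,
      by simp only []; omega,
      by simp only [Fin.mk_lt_mk]; have := Fin.lt_def.mp hab; omega, ha, hbb⟩

lemma seq_congr {m : ℕ} {w w' : Fin m → ℕ} (h : ∀ i, w i = w' i) (hw : SeqIsMotzkin w) :
    SeqIsMotzkin w' := by
  have : w' = w := funext fun i => (h i).symm
  rw [this]; exact hw

/-- Block decomposition of Motzkin permutations: `π ∈ 𝔐_n` iff exactly one of the following
holds: (i) `π₁ = n` and `(π₂,…,πₙ) ∈ 𝔐_{n-1}`; (ii) there is `2 ≤ t ≤ n` with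
`π_{t-1} = n-t+1`, `π_t = n`, the first `t-2` entries all at least `n-t+2` and forming (after
subtracting `n-t+1`) a Motzkin permutation of length `t-2`, and `(π_{t+1},…,πₙ) ∈ 𝔐_{n-t}`.
(All values and positions here are 0-indexed in the formal statement.) -/
theorem motzkin_block_decomposition (n : ℕ) (hn : 1 ≤ n) (π : Equiv.Perm (Fin n)) :
    IsMotzkinPerm π ↔
      Xor'
        ((π ⟨0, hn⟩ : ℕ) = n - 1 ∧
          SeqIsMotzkin fun i : Fin (n - 1) =>
            (π ⟨(i : ℕ) + 1, by have := i.isLt; omega⟩ : ℕ))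
        (∃ (t : ℕ) (h2 : 2 ≤ t) (htn : t ≤ n),
          (π ⟨t - 2, by omega⟩ : ℕ) = n - t ∧
          (π ⟨t - 1, by omega⟩ : ℕ) = n - 1 ∧
          (∀ i : Fin n, (i : ℕ) < t - 2 → n - t + 1 ≤ (π i : ℕ)) ∧
          (SeqIsMotzkin fun i : Fin (t - 2) =>
            (π ⟨(i : ℕ), by have := i.isLt; omega⟩ : ℕ)) ∧
          (SeqIsMotzkin fun i : Fin (n - t) =>
            (π ⟨t + (i : ℕ), by have := i.isLt; omega⟩ : ℕ))) := by
  have hinj : ∀ i j : Fin n, (π i : ℕ) = (π j : ℕ) → i = j := fun i j h =>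
    π.injective (Fin.ext h)
  have hne : ∀ i j : Fin n, (i : ℕ) ≠ (j : ℕ) → (π i : ℕ) ≠ (π j : ℕ) := fun i j hij h =>
    hij (congrArg Fin.val (hinj i j h))
  have hlt : ∀ i : Fin n, (π i : ℕ) ≤ n - 1 := fun i => by have := (π i).isLt; omega
  have pe : ∀ (a b : Fin n), (a : ℕ) = (b : ℕ) → (π a : ℕ) = (π b : ℕ) := fun a b h =>
    congrArg (fun x : Fin n => ((π x : ℕ))) (Fin.ext h)
  constructor
  · intro hM
    have h132 : ¬∃ i j k : Fin n, i < j ∧ j < k ∧ (π i : ℕ) < (π k : ℕ) ∧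
        (π k : ℕ) < (π j : ℕ) := hM.1
    have h123 : ¬∃ (a b : Fin n) (h : (b : ℕ) + 1 < n), a < b ∧ (π a : ℕ) < (π b : ℕ) ∧
        (π b : ℕ) < (π ⟨(b : ℕ) + 1, h⟩ : ℕ) := hM.2
    obtain ⟨p, hp⟩ : ∃ p : Fin n, (π p : ℕ) = n - 1 :=
      ⟨π.symm ⟨n - 1, by omega⟩, by simp⟩
    have fact1 : ∀ i k : Fin n, (i : ℕ) < (p : ℕ) → (p : ℕ) < (k : ℕ) →
        (π k : ℕ) < (π i : ℕ) := by
      intro i k h1 h2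
      by_contra hc
      push_neg at hc
      apply h132
      refine ⟨i, p, k, Fin.lt_def.mpr h1, Fin.lt_def.mpr h2,
        lt_of_le_of_ne hc (hne i k (by omega)), ?_⟩
      have hk1 : (π k : ℕ) ≠ n - 1 := fun h => (hne k p (by omega)) (h.trans hp.symm)
      have hk2 := hlt k
      omega
    rcases Nat.eq_zero_or_pos (p : ℕ) with hp0 | hp1
    · -- case A: max at position 0
      refine Or.inl ⟨⟨?_, ?_⟩, ?_⟩
      · rw [pe ⟨0, hn⟩ p (show (0 : ℕ) = (p : ℕ) by omega)]; exact hp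
      · refine seq_congr (fun i => pe ⟨1 + (i : ℕ), by have := i.isLt; omega⟩
          ⟨(i : ℕ) + 1, by have := i.isLt; omega⟩
          (show 1 + (i : ℕ) = (i : ℕ) + 1 by omega)) (seq_sub hM 1 (n - 1) (by omega))
      · rintro ⟨t, h2, htn, -, hvm, -, -, -⟩
        have hvm' : (π (⟨t - 1, by omega⟩ : Fin n) : ℕ) = n - 1 := hvm
        have he : (⟨t - 1, by omega⟩ : Fin n) = p := hinj _ _ (by rw [hvm', hp])
        have : t - 1 = (p : ℕ) := congrArg Fin.val he
        omega
    · -- case B: max at position p ≥ 1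
      have hpn : (p : ℕ) < n := p.isLt
      obtain ⟨q, hq⟩ : ∃ q : Fin n, (q : ℕ) = (p : ℕ) - 1 := ⟨⟨_, by omega⟩, rfl⟩
      have hmin : ∀ r : Fin n, (r : ℕ) < (q : ℕ) → (π q : ℕ) < (π r : ℕ) := by
        intro r hr
        by_contra hc
        push_neg at hc
        apply h123
        refine ⟨r, q, by omega, Fin.lt_def.mpr hr,
          lt_of_le_of_ne hc (hne r q (by omega)), ?_⟩
        have e : (π (⟨(q : ℕ) + 1, by omega⟩ : Fin n) : ℕ) = n - 1 :=
          (pe ⟨(q : ℕ) + 1, by omega⟩ p (show (q : ℕ) + 1 = (p : ℕ) by omega)).trans hp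
        have h1 := hlt q
        have h2 : (π q : ℕ) ≠ n - 1 := fun h => (hne q p (by omega)) (h.trans hp.symm)
        omega
      have hcard : (π q : ℕ) = n - 1 - (p : ℕ) := by
        have hAB : Finset.univ.filter (fun i : Fin n => (p : ℕ) < (i : ℕ)) =
            Finset.univ.filter (fun i : Fin n => (π i : ℕ) < (π q : ℕ)) := by
          ext i
          simp only [Finset.mem_filter, Finset.mem_univ, true_and]
          constructor
          · intro h
            exact fact1 q i (by omega) h
          · intro h
            by_contra hc
            push_neg at hc
            rcases lt_trichotomy ((i : ℕ)) ((q : ℕ)) with h' | h' | h'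
            · have := hmin i h'; omega
            · rw [pe i q h'] at h; omega
            · have hip : (i : ℕ) = (p : ℕ) := by omega
              rw [pe i p hip, hp] at h
              have := hlt q; omega
        have hA : (Finset.univ.filter (fun i : Fin n => (p : ℕ) < (i : ℕ))).card
            = n - 1 - (p : ℕ) := by
          have e : Finset.univ.filter (fun i : Fin n => (p : ℕ) < (i : ℕ)) = Finset.Ioi p := by
            ext i
            simp only [Finset.mem_filter, Finset.mem_univ, true_and, Finset.mem_Ioi]
            exact Iff.symm Fin.lt_def
          rw [e, Fin.card_Ioi]
        have hB : (Finset.univ.filter (fun i : Fin n => (π i : ℕ) < (π q : ℕ))).card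
            = ((π q : ℕ)) := by
          have e : Finset.univ.filter (fun i : Fin n => (π i : ℕ) < (π q : ℕ)) =
              (Finset.Iio (π q)).map π.symm.toEmbedding := by
            ext i
            simp only [Finset.mem_filter, Finset.mem_univ, true_and, Finset.mem_map_equiv,
              Equiv.symm_symm, Finset.mem_Iio]
            exact Iff.symm Fin.lt_def
          rw [e, Finset.card_map]
          exact Fin.card_Iio _
        rw [hAB, hB] at hA
        exact hA
      refine Or.inr ⟨⟨(p : ℕ) + 1, by omega, by omega, ?_, ?_, ?_, ?_, ?_⟩, ?_⟩
      · exact (pe ⟨(p : ℕ) + 1 - 2, by omega⟩ q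
          (show (p : ℕ) + 1 - 2 = (q : ℕ) by omega)).trans
          (hcard.trans (show n - 1 - (p : ℕ) = n - ((p : ℕ) + 1) by omega))
      · exact (pe ⟨(p : ℕ) + 1 - 1, by omega⟩ p
          (show (p : ℕ) + 1 - 1 = (p : ℕ) by omega)).trans hp
      · intro i hi
        have h1 : (i : ℕ) < (q : ℕ) := by omega
        have := hmin i h1
        omega
      · refine seq_congr (fun i => pe ⟨0 + (i : ℕ), by have := i.isLt; omega⟩
          ⟨(i : ℕ), by have := i.isLt; omega⟩ (show 0 + (i : ℕ) = (i : ℕ) by omega))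
          (seq_sub hM 0 ((p : ℕ) + 1 - 2) (by omega))
      · exact seq_sub hM ((p : ℕ) + 1) (n - ((p : ℕ) + 1)) (by omega)
      · rintro ⟨h0, -⟩
        have he : (⟨0, hn⟩ : Fin n) = p := hinj _ _ (by rw [h0, hp])
        have : (0 : ℕ) = (p : ℕ) := congrArg Fin.val he
        omega
  · intro hX
    obtain hA | hB := Or.imp And.left And.left hX
    · obtain ⟨h0, hT⟩ := hA
      obtain ⟨t132, t123⟩ := hT
      constructor
      · rintro ⟨i, j, k, hij, hjk, ha, hb⟩
        have ha' : (π i : ℕ) < (π k : ℕ) := ha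
        have hb' : (π k : ℕ) < (π j : ℕ) := hb
        have hij' := Fin.lt_def.mp hij
        have hjk' := Fin.lt_def.mp hjk
        have hk := k.isLt
        rcases Nat.eq_zero_or_pos (i : ℕ) with h | h
        · have e : (π i : ℕ) = n - 1 := (pe i ⟨0, hn⟩ h).trans h0
          have := hlt k; omega
        · apply t132
          refine ⟨⟨(i : ℕ) - 1, by omega⟩, ⟨(j : ℕ) - 1, by omega⟩, ⟨(k : ℕ) - 1, by omega⟩,
            Fin.lt_def.mpr (show (i : ℕ) - 1 < (j : ℕ) - 1 by omega),
            Fin.lt_def.mpr (show (j : ℕ) - 1 < (k : ℕ) - 1 by omega), ?_, ?_⟩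
          · exact (pe ⟨(i : ℕ) - 1 + 1, by omega⟩ i (show (i : ℕ) - 1 + 1 = (i : ℕ) by omega)).trans_lt
              (ha'.trans_eq (pe k ⟨(k : ℕ) - 1 + 1, by omega⟩ (show (k : ℕ) = (k : ℕ) - 1 + 1 by omega)))
          · exact (pe ⟨(k : ℕ) - 1 + 1, by omega⟩ k (show (k : ℕ) - 1 + 1 = (k : ℕ) by omega)).trans_lt
              (hb'.trans_eq (pe j ⟨(j : ℕ) - 1 + 1, by omega⟩ (show (j : ℕ) = (j : ℕ) - 1 + 1 by omega)))
      · rintro ⟨a, b, hbn, hab, h1, h2⟩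
        have h1' : (π a : ℕ) < (π b : ℕ) := h1
        have h2' : (π b : ℕ) < (π ⟨(b : ℕ) + 1, hbn⟩ : ℕ) := h2
        have hab' := Fin.lt_def.mp hab
        rcases Nat.eq_zero_or_pos (a : ℕ) with h | h
        · have e : (π a : ℕ) = n - 1 := (pe a ⟨0, hn⟩ h).trans h0
          have := hlt b; omega
        · apply t123
          refine ⟨⟨(a : ℕ) - 1, by omega⟩, ⟨(b : ℕ) - 1, by omega⟩,
            show (b : ℕ) - 1 + 1 < n - 1 by omega,
            Fin.lt_def.mpr (show (a : ℕ) - 1 < (b : ℕ) - 1 by omega), ?_, ?_⟩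
          · exact (pe ⟨(a : ℕ) - 1 + 1, by omega⟩ a (show (a : ℕ) - 1 + 1 = (a : ℕ) by omega)).trans_lt
              (h1'.trans_eq (pe b ⟨(b : ℕ) - 1 + 1, by omega⟩ (show (b : ℕ) = (b : ℕ) - 1 + 1 by omega)))
          · exact (pe ⟨(b : ℕ) - 1 + 1, by omega⟩ b (show (b : ℕ) - 1 + 1 = (b : ℕ) by omega)).trans_lt
              (h2'.trans_eq (pe ⟨(b : ℕ) + 1, hbn⟩ ⟨(b : ℕ) - 1 + 1 + 1, by omega⟩
                (show (b : ℕ) + 1 = (b : ℕ) - 1 + 1 + 1 by omega)))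
    · obtain ⟨t, h2, htn, hv, hvm, hpre, hP, hT⟩ := hB
      have hv' : (π (⟨t - 2, by omega⟩ : Fin n) : ℕ) = n - t := hv
      have hvm' : (π (⟨t - 1, by omega⟩ : Fin n) : ℕ) = n - 1 := hvm
      obtain ⟨p132, p123⟩ := hP
      obtain ⟨t132, t123⟩ := hT
      have hpre2 : ∀ i : Fin n, (i : ℕ) < t → n - t ≤ (π i : ℕ) := by
        intro i hi
        rcases lt_trichotomy ((i : ℕ)) (t - 2) with h' | h' | h'
        · have := hpre i h'; omega
        · have e : (π i : ℕ) = n - t := (pe i ⟨t - 2, by omega⟩ h').trans hv'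
          omega
        · have e : (π i : ℕ) = n - 1 :=
            (pe i ⟨t - 1, by omega⟩ (show (i : ℕ) = t - 1 by omega)).trans hvm'
          omega
      have hc1 : (Finset.univ.filter (fun i : Fin n => (i : ℕ) < t)).card = t := by
        have e : Finset.univ.filter (fun i : Fin n => (i : ℕ) < t) =
            Finset.Iic (⟨t - 1, by omega⟩ : Fin n) := by
          ext i
          simp only [Finset.mem_filter, Finset.mem_univ, true_and, Finset.mem_Iic]
          rw [Fin.le_def]
          exact ⟨fun h => show (i : ℕ) ≤ t - 1 by omega,
            fun h => by have h' : (i : ℕ) ≤ t - 1 := h; omega⟩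
        rw [e, Fin.card_Iic]
        exact show t - 1 + 1 = t by omega
      have hc2 : (Finset.univ.filter (fun i : Fin n => n - t ≤ (π i : ℕ))).card = t := by
        have e : Finset.univ.filter (fun i : Fin n => n - t ≤ (π i : ℕ)) =
            (Finset.Ici (⟨n - t, by omega⟩ : Fin n)).map π.symm.toEmbedding := by
          ext i
          simp only [Finset.mem_filter, Finset.mem_univ, true_and, Finset.mem_map_equiv,
            Equiv.symm_symm, Finset.mem_Ici]
          rw [Fin.le_def]
        rw [e, Finset.card_map, Fin.card_Ici]
        exact show n - (n - t) = t by omega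
      have hsub : Finset.univ.filter (fun i : Fin n => (i : ℕ) < t) ⊆
          Finset.univ.filter (fun i : Fin n => n - t ≤ (π i : ℕ)) := by
        intro i hi
        simp only [Finset.mem_filter, Finset.mem_univ, true_and] at hi ⊢
        exact hpre2 i hi
      have heq := Finset.eq_of_subset_of_card_le hsub (le_of_eq (hc2.trans hc1.symm))
      have htail : ∀ i : Fin n, t ≤ (i : ℕ) → (π i : ℕ) < n - t := by
        intro i hi
        by_contra hc
        push_neg at hc
        have hmem : i ∈ Finset.univ.filter (fun i : Fin n => (i : ℕ) < t) := by
          rw [heq]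
          simp only [Finset.mem_filter, Finset.mem_univ, true_and]
          exact hc
        simp only [Finset.mem_filter, Finset.mem_univ, true_and] at hmem
        omega
      constructor
      · rintro ⟨i, j, k, hij, hjk, ha, hb⟩
        have ha' : (π i : ℕ) < (π k : ℕ) := ha
        have hb' : (π k : ℕ) < (π j : ℕ) := hb
        have hij' := Fin.lt_def.mp hij
        have hjk' := Fin.lt_def.mp hjk
        have hk := k.isLt
        rcases lt_trichotomy ((k : ℕ)) (t - 2) with hkc | hkc | hkc
        · apply p132
          refine ⟨⟨(i : ℕ), by omega⟩, ⟨(j : ℕ), by omega⟩, ⟨(k : ℕ), by omega⟩,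
            Fin.lt_def.mpr (show (i : ℕ) < (j : ℕ) from hij'),
            Fin.lt_def.mpr (show (j : ℕ) < (k : ℕ) from hjk'), ?_, ?_⟩
          · exact (pe ⟨(i : ℕ), by omega⟩ i rfl).trans_lt
              (ha'.trans_eq (pe k ⟨(k : ℕ), by omega⟩ rfl))
          · exact (pe ⟨(k : ℕ), by omega⟩ k rfl).trans_lt
              (hb'.trans_eq (pe j ⟨(j : ℕ), by omega⟩ rfl))
        · have e : (π k : ℕ) = n - t := (pe k ⟨t - 2, by omega⟩ hkc).trans hv'
          have := hpre i (by omega)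
          omega
        · rcases eq_or_lt_of_le (show t - 1 ≤ (k : ℕ) by omega) with hk2 | hk2
          · have e : (π k : ℕ) = n - 1 := (pe k ⟨t - 1, by omega⟩ (show (k : ℕ) = t - 1 by omega)).trans hvm'
            have := hlt j; omega
          · have hkt : t ≤ (k : ℕ) := by omega
            have hsm := htail k hkt
            by_cases hit : (i : ℕ) < t
            · have := hpre2 i hit; omega
            · push_neg at hit
              apply t132
              have hi' := i.isLt
              have hj' := j.isLt
              refine ⟨⟨(i : ℕ) - t, by omega⟩, ⟨(j : ℕ) - t, by omega⟩, ⟨(k : ℕ) - t, by omega⟩,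
                Fin.lt_def.mpr (show (i : ℕ) - t < (j : ℕ) - t by omega),
                Fin.lt_def.mpr (show (j : ℕ) - t < (k : ℕ) - t by omega), ?_, ?_⟩
              · exact (pe ⟨t + ((i : ℕ) - t), by omega⟩ i
                  (show t + ((i : ℕ) - t) = (i : ℕ) by omega)).trans_lt
                  (ha'.trans_eq (pe k ⟨t + ((k : ℕ) - t), by omega⟩
                    (show (k : ℕ) = t + ((k : ℕ) - t) by omega)))
              · exact (pe ⟨t + ((k : ℕ) - t), by omega⟩ k
                  (show t + ((k : ℕ) - t) = (k : ℕ) by omega)).trans_lt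
                  (hb'.trans_eq (pe j ⟨t + ((j : ℕ) - t), by omega⟩
                    (show (j : ℕ) = t + ((j : ℕ) - t) by omega)))
      · rintro ⟨a, b, hbn, hab, h1, h2⟩
        have h1' : (π a : ℕ) < (π b : ℕ) := h1
        have h2' : (π b : ℕ) < (π ⟨(b : ℕ) + 1, hbn⟩ : ℕ) := h2
        have hab' := Fin.lt_def.mp hab
        rcases lt_trichotomy ((b : ℕ) + 1) (t - 2) with hbc | hbc | hbc
        · apply p123
          refine ⟨⟨(a : ℕ), by omega⟩, ⟨(b : ℕ), by omega⟩,
            show (b : ℕ) + 1 < t - 2 from hbc,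
            Fin.lt_def.mpr (show (a : ℕ) < (b : ℕ) from hab'), ?_, ?_⟩
          · exact (pe ⟨(a : ℕ), by omega⟩ a rfl).trans_lt
              (h1'.trans_eq (pe b ⟨(b : ℕ), by omega⟩ rfl))
          · exact (pe ⟨(b : ℕ), by omega⟩ b rfl).trans_lt
              (h2'.trans_eq (pe ⟨(b : ℕ) + 1, hbn⟩ ⟨(b : ℕ) + 1, by omega⟩ rfl))
        · have e : (π (⟨(b : ℕ) + 1, hbn⟩ : Fin n) : ℕ) = n - t :=
            (pe ⟨(b : ℕ) + 1, hbn⟩ ⟨t - 2, by omega⟩ hbc).trans hv'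
          have := hpre b (by omega)
          omega
        · rcases lt_trichotomy ((b : ℕ) + 1) (t - 1) with hb2 | hb2 | hb2
          · omega
          · have eb : (π b : ℕ) = n - t := (pe b ⟨t - 2, by omega⟩ (show (b : ℕ) = t - 2 by omega)).trans hv'
            have := hpre a (by omega)
            omega
          · rcases lt_trichotomy ((b : ℕ) + 1) t with hb3 | hb3 | hb3
            · omega
            · have eb : (π b : ℕ) = n - 1 :=
                (pe b ⟨t - 1, by omega⟩ (show (b : ℕ) = t - 1 by omega)).trans hvm'
              have := hlt ⟨(b : ℕ) + 1, hbn⟩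
              omega
            · have hbt : t ≤ (b : ℕ) := by omega
              have hsm := htail b hbt
              by_cases hat : (a : ℕ) < t
              · have := hpre2 a hat; omega
              · push_neg at hat
                apply t123
                have ha' := a.isLt
                refine ⟨⟨(a : ℕ) - t, by omega⟩, ⟨(b : ℕ) - t, by omega⟩,
                  show (b : ℕ) - t + 1 < n - t by omega,
                  Fin.lt_def.mpr (show (a : ℕ) - t < (b : ℕ) - t by omega), ?_, ?_⟩
                · exact (pe ⟨t + ((a : ℕ) - t), by omega⟩ a
                    (show t + ((a : ℕ) - t) = (a : ℕ) by omega)).trans_lt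
                    (h1'.trans_eq (pe b ⟨t + ((b : ℕ) - t), by omega⟩
                      (show (b : ℕ) = t + ((b : ℕ) - t) by omega)))
                · exact (pe ⟨t + ((b : ℕ) - t), by omega⟩ b
                    (show t + ((b : ℕ) - t) = (b : ℕ) by omega)).trans_lt
                    (h2'.trans_eq (pe ⟨(b : ℕ) + 1, hbn⟩ ⟨t + ((b : ℕ) - t + 1), by omega⟩
                      (show (b : ℕ) + 1 = t + ((b : ℕ) - t + 1) by omega)))
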